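/- Define Γ on binary words by Γ(1^{m_0} 2^{n_0} 1^{m_1} 2^{n_1} ⋯ 1^{m_d} 2^{n_d}) = 1^{m_0} 2 1^{m_1−1} ⋯ 2 1^{m_{d−1}−1} 2 1^{m_d} 2^{n_0−1} 1 2^{n_1−1} ⋯ 2^{n_{d−2}−1} 1 2^{n_{d−1}−1+n_d}. Then for every binary word ω, des(ω) = exc(Γ(ω)). -/

import Mathlib

/-- Count the leading letters of a list equal to `a`; return the count and the rest. -/
def leadCount (a : ℕ) : List ℕ → ℕ × List ℕ
  | [] => (0, [])
  | b :: rest =>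
    if b = a then
      let p := leadCount a rest
      (p.1 + 1, p.2)
    else (0, b :: rest)

def blocksAux : ℕ → List ℕ → List (ℕ × ℕ)
  | 0, _ => []
  | _, [] => []
  | fuel + 1, w =>
    let p := leadCount 1 w
    let q := leadCount 2 p.2
    (p.1, q.1) :: blocksAux fuel q.2

/-- The descent-block decomposition `[(m₀,n₀),…,(m_d,n_d)]` of a binary word
`1^{m₀} 2^{n₀} ⋯ 1^{m_d} 2^{n_d}`. -/
def blocks (w : List ℕ) : List (ℕ × ℕ) := blocksAux w.length w

/-- The word `1^{m₀} 2^{n₀} ⋯ 1^{m_d} 2^{n_d}` determined by blocks. -/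
def blockWord (bs : List (ℕ × ℕ)) : List ℕ :=
  bs.flatMap fun p => List.replicate p.1 1 ++ List.replicate p.2 2

/-- `[(m₀,n₀),…,(m_d,n_d)]` is a valid descent-block decomposition:
`m_i > 0` for `1 ≤ i ≤ d` and `n_j > 0` for `0 ≤ j ≤ d-1`. -/
def ValidBlocks (bs : List (ℕ × ℕ)) : Prop :=
  bs ≠ [] ∧ (∀ p ∈ bs.tail, 0 < p.1) ∧ (∀ p ∈ bs.dropLast, 0 < p.2)

/-- A word on the alphabet {1,2}. -/
def IsBinary (w : List ℕ) : Prop := ∀ a ∈ w, a = 1 ∨ a = 2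

/-- The descent number of a word. -/
def des (w : List ℕ) : ℕ := (w.zip w.tail).countP fun p => decide (p.2 < p.1)

/-- The excedance number of a binary word with `k` ones: the number of
positions `i ≤ k` carrying the letter 2. -/
def exc (w : List ℕ) : ℕ := (w.take (w.count 1)).count 2

/-- `Ψ = Φ₁⁻¹` on binary words, via the descent-block decomposition. -/
def psiBlocks (bs : List (ℕ × ℕ)) : List ℕ :=
  List.replicate (bs.headD (0,0)).1 1
    ++ bs.tail.flatMap (fun p => 2 :: List.replicate (p.1 - 1) 1)
    ++ bs.dropLast.flatMap (fun p => List.replicate (p.2 - 1) 2 ++ [1])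
    ++ List.replicate (bs.getLastD (0,0)).2 2

def Psi (w : List ℕ) : List ℕ := psiBlocks (blocks w)

/-- Foata's second fundamental transformation on binary words. -/
def phi2Blocks (bs : List (ℕ × ℕ)) : List ℕ :=
  bs.tail.reverse.flatMap (fun p => List.replicate (p.1 - 1) 1 ++ [2])
    ++ List.replicate (bs.headD (0,0)).1 1
    ++ bs.dropLast.flatMap (fun p => List.replicate (p.2 - 1) 2 ++ [1])
    ++ List.replicate (bs.getLastD (0,0)).2 2

def Phi2 (w : List ℕ) : List ℕ := phi2Blocks (blocks w)

/-- The extended Steingrímsson map `Γ` on binary words. -/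
def gammaBlocks (bs : List (ℕ × ℕ)) : List ℕ :=
  match bs with
  | [] => []
  | [(m0, n0)] => List.replicate m0 1 ++ List.replicate n0 2
  | (m0, n0) :: rest =>
      List.replicate m0 1
        ++ rest.dropLast.flatMap (fun p => 2 :: List.replicate (p.1 - 1) 1)
        ++ (2 :: List.replicate (rest.getLastD (0,0)).1 1)
        ++ (let ns := n0 :: rest.map Prod.snd
            ns.dropLast.dropLast.flatMap (fun nj => List.replicate (nj - 1) 2 ++ [1])
              ++ List.replicate (ns.dropLast.getLastD 0 - 1 + ns.getLastD 0) 2)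

def Gamma (w : List ℕ) : List ℕ := gammaBlocks (blocks w)

/-- The involution `φ` on binary words. -/
def phi (w : List ℕ) : List ℕ :=
  let bs := blocks w
  let ns := bs.map Prod.snd
  let newms : List ℕ :=
    match (bs.map Prod.fst).reverse with
    | [] => []
    | [a] => [a]
    | a :: rest => (a - 1) :: (rest.dropLast ++ [rest.getLastD 0 + 1])
  blockWord (newms.zip ns)

/-- Fibonacci words: binary words with no two consecutive ones. -/
def IsFib (w : List ℕ) : Prop :=
  IsBinary w ∧ w.Chain' fun a b => ¬(a = 1 ∧ b = 1)

def FibSet (n : ℕ) : Set (List ℕ) := {w | IsFib w ∧ w.length = n}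

/-- Fibonacci words of length `n` ending with the letter 1. -/
def FibSet' (n : ℕ) : Set (List ℕ) :=
  {w | IsFib w ∧ w.length = n ∧ w.getLast? = some 1}

/-- Binary words of length `n` with no two consecutive twos. -/
def GSet (n : ℕ) : Set (List ℕ) :=
  {w | IsBinary w ∧ w.length = n ∧ w.Chain' fun a b => ¬(a = 2 ∧ b = 2)}

/-- The word `1^{m₀} 2^{d+n₀-1} 1 2^{n₁-1} ⋯ 1 2^{n_{d-1}-1} 1 2^{n_d}`. -/
def Rword (m0 : ℕ) (ns : List ℕ) : List ℕ :=
  match ns with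
  | [] => List.replicate m0 1
  | [n0] => List.replicate m0 1 ++ List.replicate n0 2
  | n0 :: rest =>
      List.replicate m0 1 ++ List.replicate (rest.length + n0 - 1) 2
        ++ rest.dropLast.flatMap (fun nj => 1 :: List.replicate (nj - 1) 2)
        ++ (1 :: List.replicate (rest.getLastD 0) 2)

def RSet (n : ℕ) : Set (List ℕ) :=
  {w | ∃ m0 ns, m0 ≤ 1 ∧ ns ≠ [] ∧ (∀ j ∈ List.dropLast ns, 1 ≤ j) ∧
        w = Rword m0 ns ∧ w.length = n}

/-- The Fibonacci word `1^{m₀} 2^{n₀} 1 2^{n₁} ⋯ 1 2^{n_d}`. -/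
def Fword (m0 : ℕ) (ns : List ℕ) : List ℕ :=
  List.replicate m0 1 ++ List.replicate (ns.headD 0) 2
    ++ ns.tail.flatMap fun nj => 1 :: List.replicate nj 2

/-!
Both sides equal `d`, the number of descent blocks minus one. A binary word is the concatenation
of its blocks `1^{m_i} 2^{n_i}`, and its descents are exactly the `d` junctions
`2^{n_{i-1}} 1^{m_i}`, which are genuine because `n_{i-1}, m_i > 0`. In `Γ(ω)` the prefix
`1^{m_0} 2 1^{m_1-1} ⋯ 2 1^{m_d-1}` holds exactly `d` twos, and the rest of the word holds exactly
`d` ones; so this prefix is as long as the number of ones of `Γ(ω)`, and `exc` counts its `d` twos.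
-/

open List

lemma replicate_leadCount_append (a : ℕ) (w : List ℕ) :
    replicate (leadCount a w).1 a ++ (leadCount a w).2 = w := by
  induction w with
  | nil => rfl
  | cons b t ih =>
    by_cases h : b = a
    · simpa [leadCount, h, replicate_succ] using ih
    · simp [leadCount, h]

lemma head?_leadCount_snd_ne (a : ℕ) (w : List ℕ) : (leadCount a w).2.head? ≠ some a := by
  induction w with
  | nil => simp [leadCount]
  | cons b t ih =>
    by_cases h : b = a
    · simpa [leadCount, h] using ih
    · simp [leadCount, h]

lemma leadCount_fst_pos {a : ℕ} {w : List ℕ} (h : w.head? = some a) : 0 < (leadCount a w).1 := by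
  cases w with
  | nil => simp at h
  | cons b t => simp_all [leadCount]

lemma blocksAux_nil (f : ℕ) : blocksAux f [] = [] := by
  cases f <;> rfl

lemma IsBinary.of_append_right {u v : List ℕ} (h : IsBinary (u ++ v)) : IsBinary v :=
  fun a ha => h a (mem_append_right u ha)

lemma IsBinary.count_one_add_count_two {w : List ℕ} (h : IsBinary w) :
    w.count 1 + w.count 2 = w.length := by
  induction w with
  | nil => rfl
  | cons a t ih =>
    have ht : IsBinary t := fun b hb => h b (mem_cons_of_mem a hb)
    rcases h a mem_cons_self with rfl | rfl <;> simp [← ih ht] <;> omega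

lemma IsBinary.exists_blocksAux_succ {w : List ℕ} (hw : IsBinary w) (hne : w ≠ []) (f : ℕ) :
    ∃ m n r, w = replicate m 1 ++ replicate n 2 ++ r ∧
      blocksAux (f + 1) w = (m, n) :: blocksAux f r ∧ (w.head? = some 1 → 0 < m) ∧
      0 < m + n ∧ (r ≠ [] → 0 < n ∧ r.head? = some 1) := by
  obtain ⟨m, u, hmu⟩ : ∃ m u, leadCount 1 w = (m, u) := ⟨_, _, rfl⟩
  obtain ⟨n, r, hnr⟩ : ∃ n r, leadCount 2 u = (n, r) := ⟨_, _, rfl⟩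
  have hw_eq := replicate_leadCount_append 1 w
  have hu_eq := replicate_leadCount_append 2 u
  have hu_head := head?_leadCount_snd_ne 1 w
  have hr_head := head?_leadCount_snd_ne 2 u
  rw [hmu] at hw_eq hu_head
  rw [hnr] at hu_eq hr_head
  dsimp only at hw_eq hu_eq hu_head hr_head
  have hdecomp : w = replicate m 1 ++ replicate n 2 ++ r := by
    rw [append_assoc, hu_eq, hw_eq]
  have hn : u ≠ [] → 0 < n := by
    intro hu
    obtain ⟨c, s, rfl⟩ := exists_cons_of_ne_nil hu
    rcases hw c (by simp [← hw_eq]) with rfl | rfl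
    · simp at hu_head
    · simpa [hnr] using leadCount_fst_pos (a := 2) (w := 2 :: s) rfl
  refine ⟨m, n, r, hdecomp, ?_, fun h => by simpa [hmu] using leadCount_fst_pos h, ?_,
    fun hr => ⟨hn fun hu => by simp [hu, leadCount] at hnr; exact hr hnr.2, ?_⟩⟩
  · obtain ⟨b, t, rfl⟩ := exists_cons_of_ne_nil hne
    simp only [blocksAux, hmu, hnr]
  · rcases Nat.eq_zero_or_pos m with rfl | hm
    · have := hn (by rintro rfl; exact hne (by simpa using hw_eq.symm))
      omega
    · omega
  · obtain ⟨c, s, rfl⟩ := exists_cons_of_ne_nil hr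
    rcases hw c (by simp [hdecomp]) with rfl | rfl
    · rfl
    · simp at hr_head

lemma blockWord_blocksAux : ∀ (f : ℕ) {w : List ℕ}, IsBinary w → w.length ≤ f →
    blockWord (blocksAux f w) = w
  | 0, w, _, hf => by rw [eq_nil_of_length_eq_zero (Nat.le_zero.mp hf)]; rfl
  | f + 1, w, hw, hf => by
    rcases eq_or_ne w [] with rfl | hne
    · rfl
    obtain ⟨m, n, r, rfl, hblocks, -, hmn, -⟩ := hw.exists_blocksAux_succ hne f
    have hr : r.length ≤ f := by simp only [length_append, length_replicate] at hf; omega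
    rw [hblocks, blockWord, flatMap_cons, ← blockWord,
      blockWord_blocksAux f hw.of_append_right hr]

lemma validBlocks_singleton (p : ℕ × ℕ) : ValidBlocks [p] := by
  simp [ValidBlocks]

lemma validBlocks_cons_cons_iff (p q : ℕ × ℕ) (bs : List (ℕ × ℕ)) :
    ValidBlocks (p :: q :: bs) ↔ ValidBlocks (q :: bs) ∧ 0 < q.1 ∧ 0 < p.2 := by
  simp only [ValidBlocks, ne_eq, reduceCtorEq, not_false_eq_true, true_and, tail_cons,
    dropLast_cons_cons, mem_cons, forall_eq_or_imp]
  tauto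

lemma validBlocks_blocksAux : ∀ (f : ℕ) {w : List ℕ}, IsBinary w → w ≠ [] → w.length ≤ f →
    ValidBlocks (blocksAux f w) ∧ (w.head? = some 1 → ∀ p ∈ (blocksAux f w).head?, 0 < p.1)
  | 0, w, _, hne, hf => absurd (eq_nil_of_length_eq_zero (Nat.le_zero.mp hf)) hne
  | f + 1, w, hw, hne, hf => by
    obtain ⟨m, n, r, rfl, hblocks, hm, hmn, hr⟩ := hw.exists_blocksAux_succ hne f
    rw [hblocks]
    refine ⟨?_, by simpa using hm⟩
    rcases eq_or_ne r [] with rfl | hr_ne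
    · rw [blocksAux_nil]
      exact validBlocks_singleton _
    obtain ⟨hn, hr_head⟩ := hr hr_ne
    have hr_len : r.length ≤ f := by simp only [length_append, length_replicate] at hf; omega
    obtain ⟨hvalid, hfst⟩ := validBlocks_blocksAux f hw.of_append_right hr_ne hr_len
    obtain ⟨q, bs, hq⟩ := exists_cons_of_ne_nil hvalid.1
    rw [hq] at hvalid hfst ⊢
    exact (validBlocks_cons_cons_iff _ _ _).mpr ⟨hvalid, hfst hr_head q rfl, hn⟩

lemma IsBinary.validBlocks_blocks {w : List ℕ} (hw : IsBinary w) (hne : w ≠ []) :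
    ValidBlocks (blocks w) :=
  (validBlocks_blocksAux _ hw hne le_rfl).1

lemma IsBinary.blockWord_blocks {w : List ℕ} (hw : IsBinary w) : blockWord (blocks w) = w :=
  blockWord_blocksAux _ hw le_rfl

lemma des_cons_cons (a b : ℕ) (t : List ℕ) :
    des (a :: b :: t) = des (b :: t) + if b < a then 1 else 0 := by
  simp only [des, tail_cons, zip_cons_cons, countP_cons, decide_eq_true_eq]

lemma des_replicate_append {a : ℕ} {l : List ℕ} (hl : ∀ b ∈ l.head?, a ≤ b) (m : ℕ) :
    des (replicate m a ++ l) = des l := by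
  induction m with
  | zero => rfl
  | succ m ih =>
    rw [replicate_succ, cons_append]
    rcases m with _ | m
    · cases l with
      | nil => rfl
      | cons b t => simp [des_cons_cons, Nat.not_lt.mpr (hl b rfl)]
    · rw [← ih, replicate_succ, cons_append, des_cons_cons]
      simp

lemma des_replicate_append_cons_of_lt {a b : ℕ} (hab : b < a) {m : ℕ} (hm : m ≠ 0)
    (l : List ℕ) : des (replicate m a ++ b :: l) = des (b :: l) + 1 := by
  obtain ⟨k, rfl⟩ := Nat.exists_eq_succ_of_ne_zero hm
  rw [replicate_succ', append_assoc, singleton_append,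
    des_replicate_append (by simp) k, des_cons_cons, if_pos hab]

lemma des_replicate_one_append_replicate_two (m n : ℕ) :
    des (replicate m 1 ++ replicate n 2) = 0 := by
  rw [des_replicate_append (by cases n <;> simp [replicate_succ]),
    ← append_nil (replicate n 2), des_replicate_append (by simp)]
  rfl

lemma des_blockWord : ∀ {bs : List (ℕ × ℕ)}, ValidBlocks bs → des (blockWord bs) = bs.length - 1
  | [], h => absurd rfl h.1
  | [(m, n)], _ => by simpa [blockWord] using des_replicate_one_append_replicate_two m n
  | (m, n) :: (m', n') :: bs, h => by
    obtain ⟨htail, hm', hn⟩ := (validBlocks_cons_cons_iff _ _ _).mp h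
    obtain ⟨k, rfl⟩ := Nat.exists_eq_succ_of_ne_zero hm'.ne'
    have ih := des_blockWord htail
    simp only [blockWord, flatMap_cons, replicate_succ, cons_append] at ih ⊢
    rw [append_assoc, des_replicate_append (by cases n <;> simp [replicate_succ]),
      des_replicate_append_cons_of_lt (by norm_num) hn.ne', ih]
    simp

lemma exc_append_of_count_one_eq {u v : List ℕ} (hu : IsBinary u) (h : v.count 1 = u.count 2) :
    exc (u ++ v) = u.count 2 := by
  rw [exc, count_append, h, hu.count_one_add_count_two, take_left]

lemma gammaBlocks_cons_append_singleton (m₀ n₀ m n : ℕ) (bs : List (ℕ × ℕ)) :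
    gammaBlocks ((m₀, n₀) :: (bs ++ [(m, n)])) =
      replicate m₀ 1 ++ bs.flatMap (fun p => 2 :: replicate (p.1 - 1) 1) ++ 2 :: replicate m 1
        ++ ((n₀ :: bs.map Prod.snd).dropLast.flatMap (fun k => replicate (k - 1) 2 ++ [1])
          ++ replicate ((n₀ :: bs.map Prod.snd).getLastD 0 - 1 + n) 2) := by
  obtain ⟨p, bs', hp⟩ := exists_cons_of_ne_nil (l := bs ++ [(m, n)]) (by simp)
  rw [hp]
  show _ ++ _ ++ _ ++ _ = _
  rw [← hp, dropLast_concat, getLastD_concat]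
  simp only [map_append, map_cons, map_nil, ← cons_append, dropLast_concat, getLastD_concat]

lemma exc_gammaBlocks : ∀ {bs : List (ℕ × ℕ)}, ValidBlocks bs →
    exc (gammaBlocks bs) = bs.length - 1
  | [], h => absurd rfl h.1
  | [(m, n)], _ => by
    have := exc_append_of_count_one_eq (u := replicate m 1) (v := replicate n 2)
      (by simp [IsBinary]) (by simp [count_replicate])
    simpa [gammaBlocks, count_replicate] using this
  | (m₀, n₀) :: q :: bs, h => by
    obtain ⟨bs', ⟨m, n⟩, hq⟩ := (eq_nil_or_concat (q :: bs)).resolve_left (by simp)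
    have hm : 0 < m := h.2.1 (m, n) (by simp [hq])
    obtain ⟨k, rfl⟩ := Nat.exists_eq_succ_of_ne_zero hm.ne'
    rw [concat_eq_append] at hq
    set ns := (n₀ :: bs'.map Prod.snd).dropLast
    set u := replicate m₀ 1 ++ bs'.flatMap (fun p => 2 :: replicate (p.1 - 1) 1) ++
      2 :: replicate k 1
    set v := 1 :: (ns.flatMap (fun k => replicate (k - 1) 2 ++ [1]) ++
      replicate ((n₀ :: bs'.map Prod.snd).getLastD 0 - 1 + n) 2)
    have hsplit : gammaBlocks ((m₀, n₀) :: q :: bs) = u ++ v := by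
      rw [hq, gammaBlocks_cons_append_singleton, replicate_succ']
      simp [u, v, ns]
    have hu : IsBinary u := by
      intro a ha
      simp only [u, mem_append, mem_flatMap, mem_cons, mem_replicate] at ha
      aesop
    have hu₂ : u.count 2 = bs'.length + 1 := by
      simp [u, count_flatMap, Function.comp_def, count_replicate]
    have hv₁ : v.count 1 = bs'.length + 1 := by
      simp [v, ns, count_flatMap, Function.comp_def, count_replicate]
    rw [hsplit, exc_append_of_count_one_eq hu (hv₁.trans hu₂.symm), hu₂, hq]
    simp

theorem stmt_10 (w : List ℕ) (hw : IsBinary w) :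
    des w = exc (Gamma w) := by
  rcases eq_or_ne w [] with rfl | hne
  · rfl
  have hvalid := hw.validBlocks_blocks hne
  rw [Gamma, exc_gammaBlocks hvalid, ← des_blockWord hvalid, hw.blockWord_blocks]
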